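/- Let 0 < α < 1 and for each integer l ≤ 0 define, for f ∈ L²_α[0,1], the operator (T_l f)(s) = −(Σ_{n=0}^{−l} s^{2n}) ∫₀^s (r/s)^{1−l} f(r) dr + (1/(1 − s²)) ∫_s^1 (r s)^{1−l} f(r) dr for s ∈ (0,1). Then each T_l is bounded on L²_α[0,1] and ‖T_l‖ ≤ 8/α², uniformly in l. -/

import Mathlib

/-!
The kernel of `Tl l` is dominated, uniformly in `l ≤ 0`, by `K(s, r) = 2r / (s(1 - r²))` for
`r ≤ s` and `K(s, r) = rs / (1 - s²)` for `r > s`: the factor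
`(Σ_{n ≤ -l} s^{2n}) (r/s)^{1-l}` is at most `(r/s) Σ_n (rs)^n ≤ 2r / (s(1 - r²))`.
Schur's test with the test function `(1 - x²)^{α/2 - 1}` then bounds the operator with kernel `K`
on `L²_α`: integrating `K` against the test function costs `3/α` in `r` and `5/α` in `s`
(against the weight `(1 - s²)^{1-α} s`), so `‖Tl l‖² ≤ 15/α² ≤ (8/α²)²`. The integrals are
elementary: after splitting at the diagonal, each piece is `∫ x (1 - x²)^β` or `∫ (1 - x)^γ`.
-/

open MeasureTheory Real Set ENNReal NNReal

/-- The operator `T_l`, `l ≤ 0`, of the radial decomposition: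
`(T_l f)(s) = -(Σ_{n=0}^{-l} s^{2n}) ∫₀^s (r/s)^{1-l} f(r) dr
              + (1/(1-s²)) ∫_s^1 (rs)^{1-l} f(r) dr`. -/
noncomputable def Tl (l : ℤ) (f : ℝ → ℂ) (s : ℝ) : ℂ :=
  -(((∑ n ∈ Finset.range ((-l).toNat + 1), s ^ (2 * n) : ℝ) : ℂ) *
      ∫ r in Ioo (0:ℝ) s, (((r / s) ^ (1 - l) : ℝ) : ℂ) * f r) +
    ((1 / (1 - s^2) : ℝ) : ℂ) * ∫ r in Ioo s (1:ℝ), (((r * s) ^ (1 - l) : ℝ) : ℂ) * f r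

theorem setLIntegral_Ioo_eq_add {a b c : ℝ} (hab : a ≤ b) (hbc : b ≤ c) (g : ℝ → ℝ≥0∞) :
    ∫⁻ x in Ioo a c, g x = (∫⁻ x in Ioo a b, g x) + ∫⁻ x in Ioo b c, g x := by
  rcases hab.eq_or_lt with rfl | hab
  · simp
  rw [← Ioo_union_Ico_eq_Ioo hab hbc,
    lintegral_union measurableSet_Ico (Ico_disjoint_Ico_same.mono_left Ioo_subset_Ico_self),
    setLIntegral_congr (Ioo_ae_eq_Ico (a := b) (b := c)).symm]

theorem lintegral_Ioo_ofReal_eq_sub_of_hasDerivAt {a b : ℝ} {F f : ℝ → ℝ} (hab : a ≤ b)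
    (hF : ContinuousOn F (Icc a b)) (hderiv : ∀ x ∈ Ioo a b, HasDerivAt F (f x) x)
    (hf : ∀ x ∈ Ioo a b, 0 ≤ f x) :
    ∫⁻ x in Ioo a b, ENNReal.ofReal (f x) = ENNReal.ofReal (F b - F a) := by
  have hint : IntegrableOn f (Ioc a b) :=
    intervalIntegral.integrableOn_deriv_of_nonneg hF hderiv hf
  rw [← ofReal_integral_eq_lintegral_ofReal (hint.mono_set Ioo_subset_Ioc_self)
    ((ae_restrict_iff' measurableSet_Ioo).2 (ae_of_all _ hf)), integral_Ioc_eq_integral_Ioo.symm,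
    ← intervalIntegral.integral_of_le hab,
    intervalIntegral.integral_eq_sub_of_hasDerivAt_of_le hab hF hderiv
      ((intervalIntegrable_iff_integrableOn_Ioc_of_le hab).2 hint)]

theorem lintegral_Ioo_mul_one_sub_sq_rpow {a b β : ℝ} (ha : 0 ≤ a) (hab : a ≤ b) (hb : b ≤ 1)
    (hβ : β ≠ -1) (hbβ : b < 1 ∨ -1 < β) :
    ∫⁻ x in Ioo a b, ENNReal.ofReal (x * (1 - x ^ 2) ^ β) =
      ENNReal.ofReal (((1 - a ^ 2) ^ (β + 1) - (1 - b ^ 2) ^ (β + 1)) / (2 * (β + 1))) := by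
  have hβ1 : β + 1 ≠ 0 := by contrapose! hβ; linarith
  have hpos : ∀ x ∈ Ioo a b, 0 < 1 - x ^ 2 := fun x hx => by nlinarith [hx.1, hx.2]
  rw [lintegral_Ioo_ofReal_eq_sub_of_hasDerivAt
    (F := fun x => (1 - x ^ 2) ^ (β + 1) / -(2 * (β + 1))) hab ?_ (fun x hx => ?_)
    (fun x hx => mul_nonneg (ha.trans hx.1.le) (rpow_nonneg (hpos x hx).le _))]
  · congr 1
    rw [div_neg, div_neg]
    ring
  · refine ContinuousOn.div_const (fun x hx => ?_) _
    refine ((continuous_const.sub (continuous_pow 2)).continuousAt.rpow_const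
      ?_).continuousWithinAt
    rcases hbβ with hb1 | hβ'
    · exact Or.inl (by simp only [Pi.sub_apply]; nlinarith [hx.1, hx.2])
    · exact Or.inr (by linarith)
  · refine ((((hasDerivAt_pow 2 x).const_sub 1).rpow_const (p := β + 1)
      (Or.inl (hpos x hx).ne')).div_const _).congr_deriv ?_
    rw [add_sub_cancel_right]
    field_simp
    ring

theorem lintegral_Ioo_one_sub_rpow {a γ : ℝ} (ha : a ≤ 1) (hγ : -1 < γ) :
    ∫⁻ x in Ioo a 1, ENNReal.ofReal ((1 - x) ^ γ) =
      ENNReal.ofReal ((1 - a) ^ (γ + 1) / (γ + 1)) := by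
  have hγ1 : 0 < γ + 1 := by linarith
  rw [lintegral_Ioo_ofReal_eq_sub_of_hasDerivAt (F := fun x => (1 - x) ^ (γ + 1) / -(γ + 1))
    ha ?_ (fun x hx => ?_) (fun x hx => rpow_nonneg (by linarith [hx.2]) _)]
  · congr 1
    rw [sub_self, Real.zero_rpow hγ1.ne', div_neg, div_neg]
    ring
  · exact ((continuous_const.sub continuous_id).rpow_const
      fun _ => Or.inr hγ1.le).continuousOn.div_const _
  · refine ((((hasDerivAt_id x).const_sub 1).rpow_const (p := γ + 1)
      (Or.inl (by simp only [id]; linarith [hx.2]))).div_const _).congr_deriv ?_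
    rw [add_sub_cancel_right, id]
    field_simp

theorem sq_lintegral_mul_le_lintegral_mul_mul_lintegral {α : Type*} [MeasurableSpace α]
    {μ : Measure α} {K P G : α → ℝ≥0∞} (hKP : AEMeasurable (fun x => K x * P x) μ)
    (hKG : AEMeasurable (fun x => K x * ((P x)⁻¹ * G x ^ 2)) μ)
    (hP : ∀ᵐ x ∂μ, P x ≠ 0 ∧ P x ≠ ⊤) :
    (∫⁻ x, K x * G x ∂μ) ^ 2 ≤
      (∫⁻ x, K x * P x ∂μ) * ∫⁻ x, K x * ((P x)⁻¹ * G x ^ 2) ∂μ := by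
  have hsplit : ∀ᵐ x ∂μ, K x * G x =
      (K x * P x) ^ (2⁻¹ : ℝ) * (K x * ((P x)⁻¹ * G x ^ 2)) ^ (2⁻¹ : ℝ) := by
    filter_upwards [hP] with x ⟨hP0, hPtop⟩
    rw [← ENNReal.mul_rpow_of_nonneg _ _ (by norm_num),
      show K x * P x * (K x * ((P x)⁻¹ * G x ^ 2)) = (K x * G x) ^ 2 * (P x * (P x)⁻¹) by ring,
      ENNReal.mul_inv_cancel hP0 hPtop, mul_one, ← ENNReal.rpow_two, ← ENNReal.rpow_mul]
    norm_num
  have hHolder := lintegral_mul_norm_pow_le hKP hKG (p := 2⁻¹) (q := 2⁻¹) (by norm_num)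
    (by norm_num) (by norm_num)
  rw [← lintegral_congr_ae hsplit] at hHolder
  calc (∫⁻ x, K x * G x ∂μ) ^ 2
      ≤ ((∫⁻ x, K x * P x ∂μ) ^ (2⁻¹ : ℝ) *
          (∫⁻ x, K x * ((P x)⁻¹ * G x ^ 2) ∂μ) ^ (2⁻¹ : ℝ)) ^ 2 :=
        pow_le_pow_left' hHolder 2
    _ = _ := by
        simp only [mul_pow, ← ENNReal.rpow_two, ← ENNReal.rpow_mul]
        norm_num

theorem lintegral_sq_lintegral_mul_le_of_schur {X Y : Type*} [MeasurableSpace X]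
    [MeasurableSpace Y] {μ : Measure X} {ν : Measure Y} [SFinite μ] [SFinite ν]
    {K : X → Y → ℝ≥0∞} {p g w : Y → ℝ≥0∞} {q v : X → ℝ≥0∞} {A B : ℝ≥0∞}
    (hK : Measurable (Function.uncurry K)) (hp : Measurable p) (hg : Measurable g)
    (hw : Measurable w) (hq : Measurable q) (hv : Measurable v)
    (hp0 : ∀ᵐ r ∂ν, p r ≠ 0 ∧ p r ≠ ⊤)
    (hrow : ∀ᵐ s ∂μ, ∫⁻ r, K s r * p r ∂ν ≤ A * q s)
    (hcol : ∀ᵐ r ∂ν, ∫⁻ s, K s r * q s * v s ∂μ ≤ B * (p r * w r)) :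
    ∫⁻ s, (∫⁻ r, K s r * g r ∂ν) ^ 2 * v s ∂μ ≤ A * B * ∫⁻ r, g r ^ 2 * w r ∂ν := by
  have hKs : ∀ s, Measurable (K s) := fun s => hK.of_uncurry_left
  have hG : Measurable fun r => (p r)⁻¹ * g r ^ 2 := hp.inv.mul (hg.pow_const 2)
  calc ∫⁻ s, (∫⁻ r, K s r * g r ∂ν) ^ 2 * v s ∂μ
      ≤ ∫⁻ s, A * (q s * v s * ∫⁻ r, K s r * ((p r)⁻¹ * g r ^ 2) ∂ν) ∂μ := by
        refine lintegral_mono_ae (hrow.mono fun s hs => ?_)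
        calc (∫⁻ r, K s r * g r ∂ν) ^ 2 * v s
            ≤ (∫⁻ r, K s r * p r ∂ν) * (∫⁻ r, K s r * ((p r)⁻¹ * g r ^ 2) ∂ν) * v s := by
              gcongr
              exact sq_lintegral_mul_le_lintegral_mul_mul_lintegral
                ((hKs s).mul hp).aemeasurable ((hKs s).mul hG).aemeasurable hp0
          _ ≤ A * q s * (∫⁻ r, K s r * ((p r)⁻¹ * g r ^ 2) ∂ν) * v s := by gcongr
          _ = _ := by ring
    _ = A * ∫⁻ s, ∫⁻ r, q s * v s * (K s r * ((p r)⁻¹ * g r ^ 2)) ∂ν ∂μ := by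
        have hint : Measurable fun s => q s * v s * ∫⁻ r, K s r * ((p r)⁻¹ * g r ^ 2) ∂ν :=
          (hq.mul hv).mul (hK.mul (hG.comp measurable_snd)).lintegral_prod_right'
        rw [lintegral_const_mul _ hint]
        congr 1
        exact lintegral_congr fun s => (lintegral_const_mul _ ((hKs s).mul hG)).symm
    _ = A * ∫⁻ r, ∫⁻ s, q s * v s * (K s r * ((p r)⁻¹ * g r ^ 2)) ∂μ ∂ν := by
        rw [lintegral_lintegral_swap]
        exact (((hq.mul hv).comp measurable_fst).mul
          (hK.mul (hG.comp measurable_snd))).aemeasurable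
    _ = A * ∫⁻ r, (p r)⁻¹ * g r ^ 2 * ∫⁻ s, K s r * q s * v s ∂μ ∂ν := by
        congr 1
        refine lintegral_congr fun r => ?_
        have hKr : Measurable fun s => K s r * q s * v s := (hK.of_uncurry_right.mul hq).mul hv
        rw [← lintegral_const_mul _ hKr]
        exact lintegral_congr fun s => by ring
    _ ≤ A * ∫⁻ r, (p r)⁻¹ * g r ^ 2 * (B * (p r * w r)) ∂ν := by
        gcongr A * ?_
        exact lintegral_mono_ae (hcol.mono fun r hr => by gcongr)
    _ = A * B * ∫⁻ r, g r ^ 2 * w r ∂ν := by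
        have hgw : Measurable fun r => g r ^ 2 * w r := (hg.pow_const 2).mul hw
        rw [mul_assoc, ← lintegral_const_mul _ hgw]
        congr 1
        refine lintegral_congr_ae (hp0.mono fun r ⟨hpr0, hprtop⟩ => ?_)
        dsimp only
        rw [show (p r)⁻¹ * g r ^ 2 * (B * (p r * w r)) =
          ((p r)⁻¹ * p r) * (B * (g r ^ 2 * w r)) by ring,
          ENNReal.inv_mul_cancel hpr0 hprtop, one_mul]

theorem enorm_ofReal_mul_setIntegral_le {S : Set ℝ} (hS : MeasurableSet S) {c : ℝ}
    {φ k : ℝ → ℝ} (f : ℝ → ℂ) (hc : 0 ≤ c) (hφ : ∀ x ∈ S, 0 ≤ φ x)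
    (hk : ∀ x ∈ S, c * φ x ≤ k x) :
    ‖((c : ℝ) : ℂ) * ∫ x in S, ((φ x : ℝ) : ℂ) * f x‖ₑ ≤
      ∫⁻ x in S, ENNReal.ofReal (k x) * ‖f x‖ₑ := by
  rw [enorm_mul, ← ofReal_norm, Complex.norm_real, Real.norm_of_nonneg hc]
  calc ENNReal.ofReal c * ‖∫ x in S, ((φ x : ℝ) : ℂ) * f x‖ₑ
      ≤ ENNReal.ofReal c * ∫⁻ x in S, ‖((φ x : ℝ) : ℂ) * f x‖ₑ := by
        gcongr; exact enorm_integral_le_lintegral_enorm _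
    _ = ∫⁻ x in S, ENNReal.ofReal (c * φ x) * ‖f x‖ₑ := by
        rw [← lintegral_const_mul' _ _ ofReal_ne_top]
        refine setLIntegral_congr_fun hS fun x hx => ?_
        rw [enorm_mul, ← ofReal_norm (φ x : ℂ), Complex.norm_real, Real.norm_of_nonneg (hφ x hx),
          ENNReal.ofReal_mul hc, mul_assoc]
    _ ≤ ∫⁻ x in S, ENNReal.ofReal (k x) * ‖f x‖ₑ :=
        setLIntegral_mono' hS fun x hx => by gcongr; exact hk x hx

noncomputable def tlKernel (s r : ℝ) : ℝ :=
  if r ≤ s then 2 * r / (s * (1 - r ^ 2)) else r * s / (1 - s ^ 2)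

theorem measurable_uncurry_tlKernel : Measurable (Function.uncurry tlKernel) :=
  Measurable.ite (measurableSet_le measurable_snd measurable_fst) (by fun_prop) (by fun_prop)

theorem geom_sum_sq_mul_div_pow_le {m : ℕ} {r s : ℝ} (hr : 0 < r) (hrs : r ≤ s) (hs : s < 1) :
    (∑ n ∈ Finset.range (m + 1), s ^ (2 * n)) * (r / s) ^ (m + 1) ≤ 2 * r / (s * (1 - r ^ 2)) := by
  have hs0 : 0 < s := hr.trans_le hrs
  have hrs1 : r * s < 1 := by nlinarith
  have hq0 : 0 ≤ r / s := by positivity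
  have hq1 : r / s ≤ 1 := div_le_one_of_le₀ hrs hs0.le
  have hterm : ∀ n ∈ Finset.range (m + 1), s ^ (2 * n) * (r / s) ^ m ≤ (r * s) ^ n := by
    intro n hn
    calc s ^ (2 * n) * (r / s) ^ m ≤ s ^ (2 * n) * (r / s) ^ n :=
          mul_le_mul_of_nonneg_left
            (pow_le_pow_of_le_one hq0 hq1 (Nat.lt_succ_iff.mp (Finset.mem_range.mp hn)))
            (by positivity)
      _ = (r * s) ^ n := by
          rw [pow_mul, ← mul_pow]
          congr 1
          field_simp
  have hgeom : ∑ n ∈ Finset.range (m + 1), (r * s) ^ n ≤ 1 / (1 - r * s) := by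
    simpa using geom_sum_Ico_le_of_lt_one (m := 0) (n := m + 1) (by positivity) hrs1
  calc (∑ n ∈ Finset.range (m + 1), s ^ (2 * n)) * (r / s) ^ (m + 1)
      = r / s * ∑ n ∈ Finset.range (m + 1), s ^ (2 * n) * (r / s) ^ m := by
        rw [Finset.mul_sum, Finset.sum_mul, pow_succ]
        exact Finset.sum_congr rfl fun n _ => by ring
    _ ≤ r / s * (1 / (1 - r * s)) := by gcongr; exact (Finset.sum_le_sum hterm).trans hgeom
    _ ≤ 2 * r / (s * (1 - r ^ 2)) := by
        have h : 1 - r ^ 2 ≤ 2 * (1 - r * s) := by nlinarith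
        rw [div_mul_div_comm, mul_one, div_le_div_iff₀ (by nlinarith) (by nlinarith)]
        nlinarith [mul_le_mul_of_nonneg_left h (mul_pos hr hs0).le]

theorem enorm_Tl_le {l : ℤ} (hl : l ≤ 0) (f : ℝ → ℂ) {s : ℝ} (hs : s ∈ Ioo (0 : ℝ) 1) :
    ‖Tl l f s‖ₑ ≤ ∫⁻ r in Ioo (0 : ℝ) 1, ENNReal.ofReal (tlKernel s r) * ‖f r‖ₑ := by
  obtain ⟨hs0, hs1⟩ := hs
  set m := (-l).toNat
  have hm : 1 - l = ((m + 1 : ℕ) : ℤ) := by push_cast; omega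
  have hs2 : 0 < 1 - s ^ 2 := by nlinarith
  have hinner : ‖(((∑ n ∈ Finset.range (m + 1), s ^ (2 * n) : ℝ) : ℂ) *
      ∫ r in Ioo (0:ℝ) s, (((r / s) ^ (1 - l) : ℝ) : ℂ) * f r)‖ₑ ≤
      ∫⁻ r in Ioo (0 : ℝ) s, ENNReal.ofReal (tlKernel s r) * ‖f r‖ₑ := by
    refine enorm_ofReal_mul_setIntegral_le measurableSet_Ioo f
      (Finset.sum_nonneg fun n _ => by positivity) (fun r hr => by have := hr.1; positivity)
      fun r hr => ?_
    rw [tlKernel, if_pos hr.2.le, hm, zpow_natCast]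
    exact geom_sum_sq_mul_div_pow_le hr.1 hr.2.le hs1
  have houter : ‖((1 / (1 - s ^ 2) : ℝ) : ℂ) *
      ∫ r in Ioo s (1:ℝ), (((r * s) ^ (1 - l) : ℝ) : ℂ) * f r‖ₑ ≤
      ∫⁻ r in Ioo s 1, ENNReal.ofReal (tlKernel s r) * ‖f r‖ₑ := by
    refine enorm_ofReal_mul_setIntegral_le measurableSet_Ioo f (by positivity)
      (fun r hr => by have := hs0.trans hr.1; positivity) fun r hr => ?_
    have hr0 : 0 < r := hs0.trans hr.1
    rw [tlKernel, if_neg (not_le.mpr hr.1), hm, zpow_natCast, one_div_mul_eq_div]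
    gcongr
    exact pow_le_of_le_one (by positivity) (by nlinarith [hr.2]) (by omega)
  rw [setLIntegral_Ioo_eq_add hs0.le hs1.le, Tl]
  exact (enorm_add_le _ _).trans (by rw [enorm_neg]; exact add_le_add hinner houter)

theorem rpow_half_sub_one_mul_rpow_one_sub {x : ℝ} (hx : 0 < x) (α : ℝ) :
    x ^ (α / 2 - 1) * x ^ (1 - α) = x ^ (-(α / 2)) := by
  rw [← rpow_add hx]; ring_nf

theorem lintegral_Ioo_zero_tlKernel_mul_rpow_le {α s : ℝ} (hα0 : 0 < α) (hα1 : α < 1)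
    (hs0 : 0 < s) (hs1 : s < 1) :
    ∫⁻ r in Ioo 0 s, ENNReal.ofReal (tlKernel s r) *
        ENNReal.ofReal ((1 - r ^ 2) ^ (α / 2 - 1)) ≤
      ENNReal.ofReal (2 * (1 - s ^ 2) ^ (α / 2 - 1)) := by
  have hs2 : 0 < 1 - s ^ 2 := by nlinarith
  set P := (1 - s ^ 2) ^ (α / 2 - 1) with hP
  have hsP : (1 - s ^ 2) * P ≤ 1 := by
    rw [hP, mul_comm, ← rpow_add_one hs2.ne']
    exact rpow_le_one hs2.le (by nlinarith) (by linarith)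
  calc ∫⁻ r in Ioo 0 s, ENNReal.ofReal (tlKernel s r) *
        ENNReal.ofReal ((1 - r ^ 2) ^ (α / 2 - 1))
      = ∫⁻ r in Ioo 0 s, ENNReal.ofReal (2 / s) *
          ENNReal.ofReal (r * (1 - r ^ 2) ^ (α / 2 - 2)) := by
        refine setLIntegral_congr_fun measurableSet_Ioo fun r hr => ?_
        have hr2 : 0 < 1 - r ^ 2 := by nlinarith [hr.1, hr.2]
        rw [tlKernel, if_pos hr.2.le, ← ENNReal.ofReal_mul (by have := hr.1; positivity),
          ← ENNReal.ofReal_mul (by positivity), show α / 2 - 2 = α / 2 - 1 - 1 by ring,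
          rpow_sub_one hr2.ne' (α / 2 - 1)]
        congr 1
        field_simp
    _ = ENNReal.ofReal (2 / s * ((1 - P) / (α - 2))) := by
        rw [lintegral_const_mul' _ _ ofReal_ne_top, lintegral_Ioo_mul_one_sub_sq_rpow le_rfl
          hs0.le hs1.le (by linarith) (Or.inl hs1), ← ENNReal.ofReal_mul (by positivity)]
        congr 2
        rw [show α / 2 - 2 + 1 = α / 2 - 1 by ring, show (1 : ℝ) - 0 ^ 2 = 1 by norm_num,
          Real.one_rpow, hP]
        ring
    _ ≤ ENNReal.ofReal (2 * P) := by
        refine ENNReal.ofReal_le_ofReal ?_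
        have hs2P : s ^ 2 * P ≤ s * (2 - α) * P := by gcongr; nlinarith
        rw [div_mul_div_comm, div_le_iff_of_neg (by nlinarith)]
        nlinarith

theorem lintegral_Ioo_one_tlKernel_mul_rpow_le {α s : ℝ} (hα0 : 0 < α) (hs0 : 0 < s)
    (hs1 : s < 1) :
    ∫⁻ r in Ioo s 1, ENNReal.ofReal (tlKernel s r) *
        ENNReal.ofReal ((1 - r ^ 2) ^ (α / 2 - 1)) ≤
      ENNReal.ofReal ((1 - s ^ 2) ^ (α / 2 - 1) / α) := by
  have hs2 : 0 < 1 - s ^ 2 := by nlinarith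
  set P := (1 - s ^ 2) ^ (α / 2 - 1) with hP
  have hP0 : 0 ≤ P := rpow_nonneg hs2.le _
  have hQ : (1 - s ^ 2) ^ (α / 2) = (1 - s ^ 2) * P := by
    rw [hP, mul_comm, ← rpow_add_one hs2.ne']; ring_nf
  calc ∫⁻ r in Ioo s 1, ENNReal.ofReal (tlKernel s r) *
        ENNReal.ofReal ((1 - r ^ 2) ^ (α / 2 - 1))
      = ∫⁻ r in Ioo s 1, ENNReal.ofReal (s / (1 - s ^ 2)) *
          ENNReal.ofReal (r * (1 - r ^ 2) ^ (α / 2 - 1)) := by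
        refine setLIntegral_congr_fun measurableSet_Ioo fun r hr => ?_
        have hr0 : 0 < r := hs0.trans hr.1
        rw [tlKernel, if_neg (not_le.mpr hr.1), ← ENNReal.ofReal_mul (by positivity),
          ← ENNReal.ofReal_mul (by positivity)]
        congr 1
        ring
    _ = ENNReal.ofReal (s / α * P) := by
        rw [lintegral_const_mul' _ _ ofReal_ne_top, lintegral_Ioo_mul_one_sub_sq_rpow hs0.le
          hs1.le le_rfl (by linarith) (Or.inr (by linarith)), ← ENNReal.ofReal_mul (by positivity)]
        congr 1
        rw [show α / 2 - 1 + 1 = α / 2 by ring, hQ, show (1 : ℝ) - 1 ^ 2 = 0 by norm_num,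
          Real.zero_rpow (by positivity), sub_zero]
        field_simp
    _ ≤ ENNReal.ofReal (P / α) := by
        refine ENNReal.ofReal_le_ofReal ?_
        rw [div_mul_eq_mul_div]
        gcongr
        nlinarith

theorem lintegral_tlKernel_mul_rpow_le {α s : ℝ} (hα0 : 0 < α) (hα1 : α < 1)
    (hs : s ∈ Ioo (0 : ℝ) 1) :
    ∫⁻ r in Ioo (0 : ℝ) 1, ENNReal.ofReal (tlKernel s r) *
        ENNReal.ofReal ((1 - r ^ 2) ^ (α / 2 - 1)) ≤
      ENNReal.ofReal (3 / α) * ENNReal.ofReal ((1 - s ^ 2) ^ (α / 2 - 1)) := by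
  obtain ⟨hs0, hs1⟩ := hs
  have hP : 0 ≤ (1 - s ^ 2) ^ (α / 2 - 1) := rpow_nonneg (by nlinarith) _
  rw [setLIntegral_Ioo_eq_add hs0.le hs1.le, ← ENNReal.ofReal_mul (by positivity)]
  refine (add_le_add (lintegral_Ioo_zero_tlKernel_mul_rpow_le hα0 hα1 hs0 hs1)
    (lintegral_Ioo_one_tlKernel_mul_rpow_le hα0 hs0 hs1)).trans ?_
  rw [← ENNReal.ofReal_add (by positivity) (by positivity)]
  refine ENNReal.ofReal_le_ofReal ?_
  rw [div_mul_eq_mul_div, add_div' _ _ _ hα0.ne']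
  gcongr
  nlinarith

theorem lintegral_Ioo_zero_tlKernel_mul_rpow_mul_weight_le {α r : ℝ} (hα0 : 0 < α)
    (hr0 : 0 < r) (hr1 : r < 1) :
    ∫⁻ s in Ioo 0 r, ENNReal.ofReal (tlKernel s r) *
        ENNReal.ofReal ((1 - s ^ 2) ^ (α / 2 - 1)) * ENNReal.ofReal ((1 - s ^ 2) ^ (1 - α) * s) ≤
      ENNReal.ofReal (r * (1 - r ^ 2) ^ (-(α / 2)) / α) := by
  calc ∫⁻ s in Ioo 0 r, ENNReal.ofReal (tlKernel s r) *
        ENNReal.ofReal ((1 - s ^ 2) ^ (α / 2 - 1)) * ENNReal.ofReal ((1 - s ^ 2) ^ (1 - α) * s)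
      ≤ ∫⁻ s in Ioo 0 r, ENNReal.ofReal r *
          ENNReal.ofReal (s * (1 - s ^ 2) ^ (-(α / 2) - 1)) := by
        refine setLIntegral_mono' measurableSet_Ioo fun s hs => ?_
        have hs0 := hs.1
        have hs2 : 0 < 1 - s ^ 2 := by nlinarith [hs.2]
        rw [tlKernel, if_neg (not_le.mpr hs.2), ← ENNReal.ofReal_mul (by positivity),
          ← ENNReal.ofReal_mul (by positivity), ← ENNReal.ofReal_mul hr0.le]
        refine ENNReal.ofReal_le_ofReal ?_
        calc r * s / (1 - s ^ 2) * (1 - s ^ 2) ^ (α / 2 - 1) * ((1 - s ^ 2) ^ (1 - α) * s)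
            = r * (s * s * ((1 - s ^ 2) ^ (-(α / 2)) / (1 - s ^ 2))) := by
              rw [← rpow_half_sub_one_mul_rpow_one_sub hs2]; ring
          _ ≤ r * (s * ((1 - s ^ 2) ^ (-(α / 2)) / (1 - s ^ 2))) := by
              gcongr
              nlinarith [hs.2]
          _ = r * (s * (1 - s ^ 2) ^ (-(α / 2) - 1)) := by rw [rpow_sub_one hs2.ne']
    _ = ENNReal.ofReal (r * (((1 - r ^ 2) ^ (-(α / 2)) - 1) / α)) := by
        rw [lintegral_const_mul' _ _ ofReal_ne_top, lintegral_Ioo_mul_one_sub_sq_rpow le_rfl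
          hr0.le hr1.le (by linarith) (Or.inl hr1), ← ENNReal.ofReal_mul hr0.le]
        congr 2
        rw [show -(α / 2) - 1 + 1 = -(α / 2) by ring, show (1 : ℝ) - 0 ^ 2 = 1 by norm_num,
          Real.one_rpow]
        field_simp
        ring
    _ ≤ ENNReal.ofReal (r * (1 - r ^ 2) ^ (-(α / 2)) / α) := by
        refine ENNReal.ofReal_le_ofReal ?_
        rw [mul_div_assoc]
        gcongr
        linarith

theorem lintegral_Ioo_one_tlKernel_mul_rpow_mul_weight_le {α r : ℝ} (hα0 : 0 < α) (hα1 : α < 1)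
    (hr0 : 0 < r) (hr1 : r < 1) :
    ∫⁻ s in Ioo r 1, ENNReal.ofReal (tlKernel s r) *
        ENNReal.ofReal ((1 - s ^ 2) ^ (α / 2 - 1)) * ENNReal.ofReal ((1 - s ^ 2) ^ (1 - α) * s) ≤
      ENNReal.ofReal (4 * (r * (1 - r ^ 2) ^ (-(α / 2)))) := by
  have hr2 : 0 < 1 - r ^ 2 := by nlinarith
  calc ∫⁻ s in Ioo r 1, ENNReal.ofReal (tlKernel s r) *
        ENNReal.ofReal ((1 - s ^ 2) ^ (α / 2 - 1)) * ENNReal.ofReal ((1 - s ^ 2) ^ (1 - α) * s)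
      ≤ ∫⁻ s in Ioo r 1, ENNReal.ofReal (2 * r / (1 - r ^ 2)) *
          ENNReal.ofReal ((1 - s) ^ (-(α / 2))) := by
        refine setLIntegral_mono' measurableSet_Ioo fun s hs => ?_
        have hs0 : 0 < s := hr0.trans hs.1
        have hs2 : 0 < 1 - s ^ 2 := by nlinarith [hs.2]
        rw [tlKernel, if_pos hs.1.le, ← ENNReal.ofReal_mul (by positivity),
          ← ENNReal.ofReal_mul (by positivity), ← ENNReal.ofReal_mul (by positivity)]
        refine ENNReal.ofReal_le_ofReal ?_
        calc 2 * r / (s * (1 - r ^ 2)) * (1 - s ^ 2) ^ (α / 2 - 1) * ((1 - s ^ 2) ^ (1 - α) * s)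
            = 2 * r / (1 - r ^ 2) * (1 - s ^ 2) ^ (-(α / 2)) := by
              rw [← rpow_half_sub_one_mul_rpow_one_sub hs2]; field_simp
          _ ≤ 2 * r / (1 - r ^ 2) * (1 - s) ^ (-(α / 2)) :=
              mul_le_mul_of_nonneg_left (rpow_le_rpow_of_nonpos (by linarith [hs.2])
                (by nlinarith [hs.2]) (by linarith)) (by positivity)
    _ = ENNReal.ofReal (2 * r / (1 - r ^ 2) * ((1 - r) ^ (1 - α / 2) / (1 - α / 2))) := by
        rw [lintegral_const_mul' _ _ ofReal_ne_top, lintegral_Ioo_one_sub_rpow hr1.le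
          (by linarith), ← ENNReal.ofReal_mul (by positivity)]
        ring_nf
    _ ≤ ENNReal.ofReal (4 * (r * (1 - r ^ 2) ^ (-(α / 2)))) := by
        refine ENNReal.ofReal_le_ofReal ?_
        have h1r : (1 - r) ^ (1 - α / 2) ≤ (1 - r ^ 2) * (1 - r ^ 2) ^ (-(α / 2)) := by
          rw [mul_comm, ← rpow_add_one hr2.ne', show -(α / 2) + 1 = 1 - α / 2 by ring]
          exact rpow_le_rpow (by linarith) (by nlinarith) (by linarith)
        calc 2 * r / (1 - r ^ 2) * ((1 - r) ^ (1 - α / 2) / (1 - α / 2))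
            ≤ 2 * r / (1 - r ^ 2) * ((1 - r ^ 2) * (1 - r ^ 2) ^ (-(α / 2)) / (1 / 2)) := by
              gcongr
              linarith
          _ = 4 * (r * (1 - r ^ 2) ^ (-(α / 2))) := by field_simp; ring

theorem lintegral_tlKernel_mul_rpow_mul_weight_le {α r : ℝ} (hα0 : 0 < α) (hα1 : α < 1)
    (hr : r ∈ Ioo (0 : ℝ) 1) :
    ∫⁻ s in Ioo (0 : ℝ) 1, ENNReal.ofReal (tlKernel s r) *
        ENNReal.ofReal ((1 - s ^ 2) ^ (α / 2 - 1)) * ENNReal.ofReal ((1 - s ^ 2) ^ (1 - α) * s) ≤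
      ENNReal.ofReal (5 / α) * (ENNReal.ofReal ((1 - r ^ 2) ^ (α / 2 - 1)) *
        ENNReal.ofReal ((1 - r ^ 2) ^ (1 - α) * r)) := by
  obtain ⟨hr0, hr1⟩ := hr
  have hr2 : 0 < 1 - r ^ 2 := by nlinarith
  have hrR : 0 ≤ r * (1 - r ^ 2) ^ (-(α / 2)) := by positivity
  have hpw : (1 - r ^ 2) ^ (α / 2 - 1) * ((1 - r ^ 2) ^ (1 - α) * r) =
      r * (1 - r ^ 2) ^ (-(α / 2)) := by
    rw [← rpow_half_sub_one_mul_rpow_one_sub hr2]; ring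
  rw [setLIntegral_Ioo_eq_add hr0.le hr1.le, ← ENNReal.ofReal_mul (by positivity), hpw,
    ← ENNReal.ofReal_mul (by positivity)]
  refine (add_le_add (lintegral_Ioo_zero_tlKernel_mul_rpow_mul_weight_le hα0 hr0 hr1)
    (lintegral_Ioo_one_tlKernel_mul_rpow_mul_weight_le hα0 hα1 hr0 hr1)).trans ?_
  rw [← ENNReal.ofReal_add (by positivity) (by positivity)]
  refine ENNReal.ofReal_le_ofReal ?_
  rw [div_mul_eq_mul_div, div_add' _ _ _ hα0.ne', div_le_div_iff_of_pos_right hα0]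
  nlinarith

theorem stmt12_general (α : ℝ) (hα0 : 0 < α) (hα1 : α < 1) (l : ℤ) (hl : l ≤ 0)
    (f : ℝ → ℂ) (hf : Measurable f) :
    ∫⁻ s in Ioo (0:ℝ) 1,
        (‖Tl l f s‖₊ : ℝ≥0∞)^2 * ENNReal.ofReal ((1 - s^2) ^ (1 - α) * s)
      ≤ ENNReal.ofReal ((8 / α^2)^2) *
        ∫⁻ r in Ioo (0:ℝ) 1,
          (‖f r‖₊ : ℝ≥0∞)^2 * ENNReal.ofReal ((1 - r^2) ^ (1 - α) * r) := by
  simp only [← enorm_eq_nnnorm]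
  have htest : ∀ᵐ x ∂volume.restrict (Ioo (0 : ℝ) 1),
      ENNReal.ofReal ((1 - x ^ 2) ^ (α / 2 - 1)) ≠ 0 ∧
        ENNReal.ofReal ((1 - x ^ 2) ^ (α / 2 - 1)) ≠ ⊤ :=
    ae_restrict_of_forall_mem measurableSet_Ioo fun x hx =>
      ⟨(ENNReal.ofReal_pos.2 (rpow_pos_of_pos (by nlinarith [hx.1, hx.2]) _)).ne', ofReal_ne_top⟩
  calc ∫⁻ s in Ioo 0 1, ‖Tl l f s‖ₑ ^ 2 * ENNReal.ofReal ((1 - s ^ 2) ^ (1 - α) * s)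
      ≤ ∫⁻ s in Ioo 0 1, (∫⁻ r in Ioo 0 1, ENNReal.ofReal (tlKernel s r) * ‖f r‖ₑ) ^ 2 *
          ENNReal.ofReal ((1 - s ^ 2) ^ (1 - α) * s) :=
        setLIntegral_mono' measurableSet_Ioo fun s hs => by gcongr; exact enorm_Tl_le hl f hs
    _ ≤ ENNReal.ofReal (3 / α) * ENNReal.ofReal (5 / α) *
          ∫⁻ r in Ioo 0 1, ‖f r‖ₑ ^ 2 * ENNReal.ofReal ((1 - r ^ 2) ^ (1 - α) * r) :=
        lintegral_sq_lintegral_mul_le_of_schur measurable_uncurry_tlKernel.ennreal_ofReal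
          (by fun_prop) hf.enorm (by fun_prop) (by fun_prop) (by fun_prop) htest
          (ae_restrict_of_forall_mem measurableSet_Ioo fun s hs =>
            lintegral_tlKernel_mul_rpow_le hα0 hα1 hs)
          (ae_restrict_of_forall_mem measurableSet_Ioo fun r hr =>
            lintegral_tlKernel_mul_rpow_mul_weight_le hα0 hα1 hr)
    _ ≤ _ := by
        rw [← ENNReal.ofReal_mul (by positivity)]
        gcongr
        rw [div_mul_div_comm, div_pow, div_le_div_iff₀ (by positivity) (by positivity)]
        nlinarith [pow_le_one₀ hα0.le hα1.le (n := 2), pow_pos hα0 2]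

theorem stmt12 (α : ℝ) (hα0 : 0 < α) (hα1 : α < 1) (l : ℤ) (hl : l ≤ 0)
    (f : ℝ → ℂ) (hf : Measurable f)
    (hf2 : (∫⁻ r in Ioo (0:ℝ) 1,
        (‖f r‖₊ : ℝ≥0∞)^2 * ENNReal.ofReal ((1 - r^2) ^ (1 - α) * r)) < ⊤) :
    ∫⁻ s in Ioo (0:ℝ) 1,
        (‖Tl l f s‖₊ : ℝ≥0∞)^2 * ENNReal.ofReal ((1 - s^2) ^ (1 - α) * s)
      ≤ ENNReal.ofReal ((8 / α^2)^2) *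
        ∫⁻ r in Ioo (0:ℝ) 1,
          (‖f r‖₊ : ℝ≥0∞)^2 * ENNReal.ofReal ((1 - r^2) ^ (1 - α) * r) :=
  stmt12_general α hα0 hα1 l hl f hf
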